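/- arXiv:1611.06135 — 2 statements merged into one kernel-verified Lean document; each statement's English description precedes it below -/
import Mathlib

section
/- If G is a connected subcubic graph of order n ≥ 6 with n ≡ 1 (mod 4), then C(G) ≤ 7/12 + 13/(12n). -/
namespace ClusterCoeff

/-- The degree of a vertex. -/
noncomputable def deg {V : Type*} (G : SimpleGraph V) (u : V) : ℕ :=
  Nat.card (G.neighborSet u)

/-- The number of edges of the subgraph induced by the neighborhood of `u`. -/
noncomputable def nbrE {V : Type*} (G : SimpleGraph V) (u : V) : ℕ :=
  Nat.card {p : G.neighborSet u × G.neighborSet u // G.Adj p.1 p.2} / 2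

/-- The clustering coefficient of the vertex `u`. -/
noncomputable def localCC {V : Type*} (G : SimpleGraph V) (u : V) : ℝ :=
  if 2 ≤ deg G u then (nbrE G u : ℝ) / ((deg G u).choose 2) else 0

/-- The clustering coefficient of the graph `G`. -/
noncomputable def cc {V : Type*} [Fintype V] (G : SimpleGraph V) : ℝ :=
  (∑ u, localCC G u) / (Fintype.card V)

/-- The complete graph on `n` vertices minus the edge between vertices `0` and `1`. -/
def Kminus (n : ℕ) [NeZero n] : SimpleGraph (Fin n) where
  Adj a b := a ≠ b ∧ ¬((a = 0 ∧ b = 1) ∨ (a = 1 ∧ b = 0))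
  symm := by
    constructor
    intro a b h
    obtain ⟨h1, h2⟩ := h
    exact ⟨h1.symm, by tauto⟩
  loopless := by
    constructor
    intro a h
    exact h.1 rfl

/-- The graph obtained from `G` by adding the edge `uv`. -/
def addEdge {V : Type*} (G : SimpleGraph V) (u v : V) : SimpleGraph V where
  Adj a b := a ≠ b ∧ (G.Adj a b ∨ (a = u ∧ b = v) ∨ (a = v ∧ b = u))
  symm := by
    constructor
    intro a b h
    obtain ⟨h1, h2⟩ := h
    refine ⟨h1.symm, ?_⟩
    rcases h2 with h | h | h
    · exact Or.inl h.symm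
    · exact Or.inr (Or.inr ⟨h.2, h.1⟩)
    · exact Or.inr (Or.inl ⟨h.2, h.1⟩)
  loopless := by
    constructor
    intro a h
    exact h.1 rfl

/-- The graph obtained from `G` by deleting the edge `uv`. -/
def delEdge {V : Type*} (G : SimpleGraph V) (u v : V) : SimpleGraph V where
  Adj a b := G.Adj a b ∧ ¬((a = u ∧ b = v) ∨ (a = v ∧ b = u))
  symm := by
    constructor
    intro a b h
    exact ⟨h.1.symm, by tauto⟩
  loopless := by
    constructor
    intro a h
    exact G.loopless.irrefl a h.1

/-- The modified connected caveman graph `G(k,ℓ)`: `ℓ` copies of `K_{k+1} - e` arranged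
cyclically, with one edge between consecutive copies, chosen so that the graph is
`k`-regular (the two degree-deficient vertices `0` and `1` of each copy receive
the connecting edges). -/
def cave (k ℓ : ℕ) : SimpleGraph (ZMod ℓ × Fin (k + 1)) where
  Adj v w := v ≠ w ∧
    ((v.1 = w.1 ∧ v.2 ≠ w.2 ∧ ¬((v.2 = 0 ∧ w.2 = 1) ∨ (v.2 = 1 ∧ w.2 = 0))) ∨
     (w.1 = v.1 + 1 ∧ v.2 = 0 ∧ w.2 = 1) ∨
     (v.1 = w.1 + 1 ∧ w.2 = 0 ∧ v.2 = 1))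
  symm := by
    constructor
    intro v w h
    obtain ⟨h0, h⟩ := h
    refine ⟨h0.symm, ?_⟩
    rcases h with ⟨h1, h2, h3⟩ | ⟨h1, h2, h3⟩ | ⟨h1, h2, h3⟩
    · exact Or.inl ⟨h1.symm, h2.symm, by tauto⟩
    · exact Or.inr (Or.inr ⟨h1, h2, h3⟩)
    · exact Or.inr (Or.inl ⟨h1, h2, h3⟩)
  loopless := by
    constructor
    intro v h
    exact h.1 rfl

open Finset SimpleGraph

section Aux

variable {V : Type*} [Fintype V] [DecidableEq V] (G : SimpleGraph V) [DecidableRel G.Adj]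

lemma deg_eq_degree (u : V) : deg G u = G.degree u := by
  rw [deg, Nat.card_eq_fintype_card, SimpleGraph.card_neighborSet_eq_degree]

/-- triangles through `u` -/
def triAt (u : V) : Finset (Finset V) := (G.cliqueFinset 3).filter (fun s => u ∈ s)

lemma nbrE_eq (u : V) : nbrE G u = (triAt G u).card := by
  classical
  have key : Nat.card {p : G.neighborSet u × G.neighborSet u // G.Adj p.1 p.2}
      = ((G.neighborFinset u ×ˢ G.neighborFinset u).filter (fun p => G.Adj p.1 p.2)).card := by
    rw [← Fintype.card_coe, ← Nat.card_eq_fintype_card]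
    apply Nat.card_congr
    refine ⟨fun q => ⟨(q.1.1.1, q.1.2.1), ?_⟩, fun q =>
      ⟨(⟨q.1.1, ?_⟩, ⟨q.1.2, ?_⟩), ?_⟩, ?_, ?_⟩
    · simp only [Finset.mem_filter, Finset.mem_product, mem_neighborFinset]
      exact ⟨⟨q.1.1.2, q.1.2.2⟩, q.2⟩
    · have := q.2; simp only [Finset.mem_filter, Finset.mem_product, mem_neighborFinset] at this
      exact this.1.1
    · have := q.2; simp only [Finset.mem_filter, Finset.mem_product, mem_neighborFinset] at this
      exact this.1.2
    · have := q.2; simp only [Finset.mem_filter, Finset.mem_product, mem_neighborFinset] at this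
      exact this.2
    · rintro ⟨⟨⟨a, ha⟩, ⟨b, hb⟩⟩, h⟩; rfl
    · rintro ⟨⟨a, b⟩, hab⟩; rfl
  rw [nbrE, key]
  have hmem : ∀ p ∈ (G.neighborFinset u ×ˢ G.neighborFinset u).filter (fun p => G.Adj p.1 p.2),
      (insert u {p.1, p.2} : Finset V) ∈ triAt G u := by
    intro p hp
    simp only [Finset.mem_filter, Finset.mem_product, mem_neighborFinset] at hp
    simp only [triAt, Finset.mem_filter, mem_cliqueFinset_iff]
    exact ⟨is3Clique_triple_iff.2 ⟨hp.1.1, hp.1.2, hp.2⟩, Finset.mem_insert_self _ _⟩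
  have hfib := Finset.card_eq_sum_card_fiberwise hmem
  rw [hfib]
  have hconst : ∀ T ∈ triAt G u,
      (((G.neighborFinset u ×ˢ G.neighborFinset u).filter (fun p => G.Adj p.1 p.2)).filter
        (fun p => (insert u {p.1, p.2} : Finset V) = T)).card = 2 := by
    intro T hT
    simp only [triAt, Finset.mem_filter, mem_cliqueFinset_iff] at hT
    obtain ⟨hTc, huT⟩ := hT
    have hcard : (T.erase u).card = 2 := by
      rw [Finset.card_erase_of_mem huT, hTc.card_eq]
    obtain ⟨x, y, hxy, hexy⟩ := Finset.card_eq_two.1 hcard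
    have hxT : x ∈ T := Finset.mem_of_mem_erase (hexy ▸ Finset.mem_insert_self x {y})
    have hyT : y ∈ T := Finset.mem_of_mem_erase (hexy ▸ Finset.mem_insert_of_mem (Finset.mem_singleton_self y))
    have hxu : x ≠ u := Finset.ne_of_mem_erase (hexy ▸ Finset.mem_insert_self x {y})
    have hyu : y ≠ u := Finset.ne_of_mem_erase (hexy ▸ Finset.mem_insert_of_mem (Finset.mem_singleton_self y))
    have hux : G.Adj u x := hTc.1 huT hxT (Ne.symm hxu)
    have huy : G.Adj u y := hTc.1 huT hyT (Ne.symm hyu)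
    have hxey : G.Adj x y := hTc.1 hxT hyT hxy
    have hTeq : T = insert u {x, y} := by
      rw [← hexy, Finset.insert_erase huT]
    rw [show (2 : ℕ) = ({(x, y), (y, x)} : Finset (V × V)).card by
      rw [Finset.card_insert_of_notMem (by simp [hxy]), Finset.card_singleton]]
    congr 1
    apply Finset.ext
    rintro ⟨a, b⟩
    simp only [Finset.mem_filter, Finset.mem_product, mem_neighborFinset,
      Finset.mem_insert, Finset.mem_singleton, Prod.mk.injEq]
    constructor
    · rintro ⟨⟨⟨hua, hub⟩, hab⟩, heq⟩
      have haT : a ∈ ({x, y} : Finset V) := by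
        rw [← hexy, Finset.mem_erase, ← heq]
        exact ⟨(G.ne_of_adj hua).symm, by simp⟩
      have hbT : b ∈ ({x, y} : Finset V) := by
        rw [← hexy, Finset.mem_erase, ← heq]
        exact ⟨(G.ne_of_adj hub).symm, by simp⟩
      have hab' : a ≠ b := G.ne_of_adj hab
      simp only [Finset.mem_insert, Finset.mem_singleton] at haT hbT
      rcases haT with rfl | rfl <;> rcases hbT with rfl | rfl <;> tauto
    · rintro (⟨rfl, rfl⟩ | ⟨rfl, rfl⟩)
      · exact ⟨⟨⟨hux, huy⟩, hxey⟩, by rw [hTeq]⟩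
      · exact ⟨⟨⟨huy, hux⟩, hxey.symm⟩, by rw [hTeq, Finset.pair_comm]⟩
  rw [Finset.sum_congr rfl hconst, Finset.sum_const, smul_eq_mul, mul_comm]
  omega


lemma walk_boundary {S : Finset V} :
    ∀ {y x : V}, G.Walk y x → y ∉ S → x ∈ S → ∃ a b, a ∈ S ∧ b ∉ S ∧ G.Adj a b := by
  intro y x w
  induction w with
  | nil => intro hy hx; exact absurd hx hy
  | @cons p q r h w ih =>
    intro hy hx
    by_cases hq : q ∈ S
    · exact ⟨q, p, hq, hy, h.symm⟩
    · exact ih hq hx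

lemma exists_boundary (hG : G.Connected) {S : Finset V} (hne : S.Nonempty)
    (hSu : S ≠ Finset.univ) : ∃ a b, a ∈ S ∧ b ∉ S ∧ G.Adj a b := by
  obtain ⟨x, hx⟩ := hne
  obtain ⟨y, hy⟩ : ∃ y, y ∉ S := by
    by_contra h
    push_neg at h
    exact hSu (Finset.eq_univ_iff_forall.2 h)
  obtain ⟨w⟩ := hG.preconnected y x
  exact walk_boundary G w hy hx

lemma tri_deg3 (hG : G.Connected) (hn : 4 ≤ Fintype.card V) {T : Finset V}
    (hT : T ∈ G.cliqueFinset 3) : ∃ v ∈ T, 3 ≤ G.degree v := by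
  rw [mem_cliqueFinset_iff] at hT
  have hTne : T.Nonempty := Finset.card_pos.1 (by rw [hT.card_eq]; norm_num)
  have hTu : T ≠ Finset.univ := by
    intro h
    have := hT.card_eq
    rw [h, Finset.card_univ] at this
    omega
  obtain ⟨a, b, haS, hbS, hab⟩ := exists_boundary G hG hTne hTu
  refine ⟨a, haS, ?_⟩
  have hsub : insert b (T.erase a) ⊆ G.neighborFinset a := by
    intro c hc
    rw [mem_neighborFinset]
    rcases Finset.mem_insert.1 hc with rfl | hc
    · exact hab
    · rw [Finset.mem_erase] at hc
      exact hT.1 haS hc.2 (Ne.symm hc.1)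
  have hcard : (insert b (T.erase a)).card = 3 := by
    rw [Finset.card_insert_of_notMem (fun h => hbS (Finset.mem_of_mem_erase h)),
      Finset.card_erase_of_mem haS, hT.card_eq]
  rw [← hcard, SimpleGraph.degree]
  exact Finset.card_le_card hsub

lemma k4free (hG : G.Connected) (hdeg : ∀ v, G.degree v ≤ 3) (hn : 5 ≤ Fintype.card V) :
    G.CliqueFree 4 := by
  intro S hS
  have hSu : S ≠ Finset.univ := by
    intro h
    have := hS.card_eq
    rw [h, Finset.card_univ] at this
    omega
  have hSne : S.Nonempty := Finset.card_pos.1 (by rw [hS.card_eq]; norm_num)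
  obtain ⟨a, b, haS, hbS, hab⟩ := exists_boundary G hG hSne hSu
  have hsub : insert b (S.erase a) ⊆ G.neighborFinset a := by
    intro c hc
    rw [mem_neighborFinset]
    rcases Finset.mem_insert.1 hc with rfl | hc
    · exact hab
    · rw [Finset.mem_erase] at hc
      exact hS.1 haS hc.2 (Ne.symm hc.1)
  have hcard : (insert b (S.erase a)).card = 4 := by
    rw [Finset.card_insert_of_notMem (fun h => hbS (Finset.mem_of_mem_erase h)),
      Finset.card_erase_of_mem haS, hS.card_eq]
  have := Finset.card_le_card hsub
  rw [hcard] at this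
  have := hdeg a
  rw [SimpleGraph.degree] at *
  omega


omit [Fintype V] [DecidableEq V] [DecidableRel G.Adj] in
lemma connected_deleteEdge {x y : V} (hG : G.Connected)
    (hre : (G.deleteEdges {s(x, y)}).Reachable x y) :
    (G.deleteEdges {s(x, y)}).Connected := by
  have key : ∀ {a b : V}, G.Walk a b → (G.deleteEdges {s(x, y)}).Reachable a b := by
    intro a b w
    induction w with
    | nil => exact SimpleGraph.Reachable.refl _
    | @cons p q r h w ih =>
      refine SimpleGraph.Reachable.trans ?_ ih
      by_cases he : s(p, q) = s(x, y)
      · rw [Sym2.eq_iff] at he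
        rcases he with ⟨rfl, rfl⟩ | ⟨rfl, rfl⟩
        · exact hre
        · exact hre.symm
      · exact SimpleGraph.Adj.reachable (by simp [h, he])
  haveI := hG.nonempty
  constructor
  intro a b
  obtain ⟨w⟩ := hG.preconnected a b
  exact key w

lemma conn_card_le : ∀ (m : ℕ) (G : SimpleGraph V), G.Connected →
    ∀ [DecidableRel G.Adj], G.edgeFinset.card = m → Fintype.card V - 1 ≤ m := by
  intro m
  induction m using Nat.strong_induction_on with
  | _ m ih =>
    intro G hG _ hm
    by_cases hac : G.IsAcyclic
    · have htree : G.IsTree := ⟨hG, hac⟩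
      have := htree.card_edgeFinset
      omega
    · rw [SimpleGraph.IsAcyclic] at hac
      push_neg at hac
      obtain ⟨v, c, hc⟩ := hac
      cases c with
      | nil => exact absurd rfl hc.ne_nil
      | @cons _ q _ h p =>
        have he : s(v, q) ∈ (SimpleGraph.Walk.cons h p).edges := by
          simp [SimpleGraph.Walk.edges_cons]
        have hkey := (SimpleGraph.adj_and_reachable_delete_edges_iff_exists_cycle).2
          ⟨v, SimpleGraph.Walk.cons h p, hc, he⟩
        set G' := G.deleteEdges {s(v, q)} with hG'
        letI : DecidableRel G'.Adj := Classical.decRel _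
        have hconn' : G'.Connected := connected_deleteEdge G hG hkey.2
        have hedge : G'.edgeFinset = G.edgeFinset.erase s(v, q) := by
          ext e
          simp only [SimpleGraph.mem_edgeFinset, hG', SimpleGraph.edgeSet_deleteEdges,
            Set.mem_diff, Set.mem_singleton_iff, Finset.mem_erase]
          tauto
        have hvq : s(v, q) ∈ G.edgeFinset := by
          rw [SimpleGraph.mem_edgeFinset]
          exact h
        have hcard : G'.edgeFinset.card = m - 1 := by
          rw [hedge, Finset.card_erase_of_mem hvq, hm]
        have hm1 : 1 ≤ m := by
          rw [← hm]
          exact Finset.card_pos.2 ⟨_, hvq⟩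
        have := ih (m - 1) (by omega) G' hconn' hcard
        omega


lemma exists_good_edge (h4 : G.CliqueFree 4) (hdeg : ∀ v, G.degree v ≤ 3) {T : Finset V}
    (hT : T ∈ G.cliqueFinset 3) :
    ∃ x y z : V, T = {x, y, z} ∧ G.Adj x y ∧ G.Adj x z ∧ G.Adj y z ∧
      (∀ w, G.Adj x w → G.Adj y w → w = z) := by
  rw [mem_cliqueFinset_iff, is3Clique_iff] at hT
  obtain ⟨a, b, c, hab, hac, hbc, rfl⟩ := hT
  by_cases h1 : ∀ w, G.Adj a w → G.Adj b w → w = c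
  · exact ⟨a, b, c, rfl, hab, hac, hbc, h1⟩
  by_cases h2 : ∀ w, G.Adj a w → G.Adj c w → w = b
  · refine ⟨a, c, b, ?_, hac, hab, hbc.symm, h2⟩
    ext v
    simp only [Finset.mem_insert, Finset.mem_singleton]
    tauto
  exfalso
  push_neg at h1 h2
  obtain ⟨w, haw, hbw, hwc⟩ := h1
  obtain ⟨w', haw', hcw', hwb⟩ := h2
  -- a has neighbors b, c, w distinct, so degree a = 3 and nbhd = {b,c,w}
  have hsub : ({b, c, w} : Finset V) ⊆ G.neighborFinset a := by
    intro v hv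
    rw [mem_neighborFinset]
    rcases Finset.mem_insert.1 hv with rfl | hv
    · exact hab
    rcases Finset.mem_insert.1 hv with rfl | hv
    · exact hac
    · rw [Finset.mem_singleton] at hv; subst hv; exact haw
  have hwb' : w ≠ b := fun h => (G.ne_of_adj hbw) (h ▸ rfl)
  have hcard : ({b, c, w} : Finset V).card = 3 := by
    rw [Finset.card_insert_of_notMem, Finset.card_insert_of_notMem, Finset.card_singleton]
    · simp only [Finset.mem_singleton]
      exact fun h => hwc h.symm
    · simp only [Finset.mem_insert, Finset.mem_singleton]
      push_neg
      exact ⟨G.ne_of_adj hbc, fun h => hwb' h.symm⟩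
  have hdegmem : G.neighborFinset a = {b, c, w} :=
    (Finset.eq_of_subset_of_card_le hsub (by rw [hcard]; exact hdeg a)).symm
  have hw' : w' ∈ ({b, c, w} : Finset V) := by
    rw [← hdegmem, mem_neighborFinset]; exact haw'
  have hw'w : w' = w := by
    rcases Finset.mem_insert.1 hw' with rfl | hv
    · exact absurd rfl hwb
    rcases Finset.mem_insert.1 hv with rfl | hv
    · exact absurd rfl (G.ne_of_adj hcw').symm
    · simpa using hv
  subst hw'w
  -- {a, b, c, w} is a 4-clique
  apply h4 {a, b, c, w'}
  have hne : (G.ne_of_adj hab) ≠ (G.ne_of_adj hab) → False := fun h => h rfl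
  constructor
  · intro u hu v hv huv
    simp only [Finset.coe_insert, Set.mem_insert_iff, Finset.coe_singleton,
      Set.mem_singleton_iff] at hu hv
    rcases hu with rfl | rfl | rfl | rfl <;> rcases hv with rfl | rfl | rfl | rfl <;>
      first
        | exact absurd rfl huv
        | assumption
        | exact hab.symm
        | exact hac.symm
        | exact hbc.symm
        | exact haw'.symm
        | exact hbw.symm
        | exact hcw'.symm
  · rw [Finset.card_insert_of_notMem, hcard]
    simp only [Finset.mem_insert, Finset.mem_singleton]
    push_neg
    exact ⟨G.ne_of_adj hab, G.ne_of_adj hac, G.ne_of_adj haw'⟩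


lemma edges_ge : ∀ (k : ℕ) (G : SimpleGraph V), G.Connected → G.CliqueFree 4 →
    ∀ [DecidableRel G.Adj], (∀ v, G.degree v ≤ 3) → (G.cliqueFinset 3).card = k →
    Fintype.card V - 1 + k ≤ G.edgeFinset.card := by
  intro k
  induction k with
  | zero =>
    intro G hG _ _ _ _
    simpa using conn_card_le _ G hG rfl
  | succ k ih =>
    intro G hG h4 _ hdeg hk
    have hne : (G.cliqueFinset 3).Nonempty := Finset.card_pos.1 (by omega)
    obtain ⟨T, hT⟩ := hne
    obtain ⟨x, y, z, hTeq, hxy, hxz, hyz, huniq⟩ := exists_good_edge G h4 hdeg hT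
    set G' := G.deleteEdges {s(x, y)} with hG'
    letI : DecidableRel G'.Adj := Classical.decRel _
    have hzy : z ≠ y := fun h => (G.ne_of_adj hyz) h.symm
    have hxz' : G'.Adj x z := by
      rw [hG', SimpleGraph.deleteEdges_adj]
      refine ⟨hxz, ?_⟩
      rw [Set.mem_singleton_iff, Sym2.eq_iff]
      push_neg
      exact ⟨fun _ => hzy, fun h => absurd h (G.ne_of_adj hxy)⟩
    have hzy' : G'.Adj z y := by
      rw [hG', SimpleGraph.deleteEdges_adj]
      refine ⟨hyz.symm, ?_⟩
      rw [Set.mem_singleton_iff, Sym2.eq_iff]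
      push_neg
      refine ⟨fun h => absurd h (fun hh => (G.ne_of_adj hxz) hh.symm), fun h => absurd h hzy⟩
    have hre : G'.Reachable x y := hxz'.reachable.trans hzy'.reachable
    have hconn' : G'.Connected := connected_deleteEdge G hG hre
    have h4' : G'.CliqueFree 4 := h4.anti (SimpleGraph.deleteEdges_le _)
    have hdeg' : ∀ v, G'.degree v ≤ 3 := by
      intro v
      refine le_trans (Finset.card_le_card ?_) (hdeg v)
      intro w hw
      rw [mem_neighborFinset] at hw ⊢
      exact hw.1
    have hclique : G'.cliqueFinset 3 = (G.cliqueFinset 3).erase T := by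
      ext S
      rw [mem_cliqueFinset_iff, Finset.mem_erase, mem_cliqueFinset_iff]
      constructor
      · intro hS
        refine ⟨?_, hS.mono (SimpleGraph.deleteEdges_le _)⟩
        rintro rfl
        have hx : x ∈ S := by rw [hTeq]; simp
        have hy : y ∈ S := by rw [hTeq]; simp
        have := hS.1 hx hy (G.ne_of_adj hxy)
        rw [hG', SimpleGraph.deleteEdges_adj] at this
        exact this.2 rfl
      · rintro ⟨hSne, hS⟩
        have hnotboth : ¬(x ∈ S ∧ y ∈ S) := by
          rintro ⟨hx, hy⟩
          have hyex : y ∈ S.erase x := Finset.mem_erase.2 ⟨(G.ne_of_adj hxy).symm, hy⟩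
          have hc1 : ((S.erase x).erase y).card = 1 := by
            rw [Finset.card_erase_of_mem hyex, Finset.card_erase_of_mem hx, hS.card_eq]
          obtain ⟨w, hw⟩ := Finset.card_eq_one.1 hc1
          have hwmem : w ∈ (S.erase x).erase y := hw ▸ Finset.mem_singleton_self w
          have hwy : w ≠ y := (Finset.mem_erase.1 hwmem).1
          have hwx : w ≠ x := (Finset.mem_erase.1 (Finset.mem_of_mem_erase hwmem)).1
          have hwS : w ∈ S := Finset.mem_of_mem_erase (Finset.mem_of_mem_erase hwmem)
          have hwz : w = z := huniq w (hS.1 hx hwS hwx.symm) (hS.1 hy hwS hwy.symm)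
          apply hSne
          have hsub : ({x, y, w} : Finset V) ⊆ S := by
            intro v hv
            rcases Finset.mem_insert.1 hv with rfl | hv
            · exact hx
            rcases Finset.mem_insert.1 hv with rfl | hv
            · exact hy
            · rw [Finset.mem_singleton] at hv; subst hv; exact hwS
          have hc3 : ({x, y, w} : Finset V).card = 3 := by
            rw [Finset.card_insert_of_notMem, Finset.card_insert_of_notMem,
              Finset.card_singleton]
            · simp only [Finset.mem_singleton]; exact fun h => hwy h.symm
            · simp only [Finset.mem_insert, Finset.mem_singleton]
              push_neg
              exact ⟨G.ne_of_adj hxy, fun h => hwx h.symm⟩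
          have := Finset.eq_of_subset_of_card_le hsub (by rw [hc3]; exact le_of_eq hS.card_eq)
          rw [← this, hTeq, hwz]
        refine ⟨?_, hS.2⟩
        intro a ha b hb hab
        rw [hG', SimpleGraph.deleteEdges_adj]
        refine ⟨hS.1 ha hb hab, ?_⟩
        rw [Set.mem_singleton_iff, Sym2.eq_iff]
        rintro (⟨rfl, rfl⟩ | ⟨rfl, rfl⟩)
        · exact hnotboth ⟨ha, hb⟩
        · exact hnotboth ⟨hb, ha⟩
    have hk' : (G'.cliqueFinset 3).card = k := by
      rw [hclique, Finset.card_erase_of_mem hT, hk]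
      omega
    have hedge : G'.edgeFinset = G.edgeFinset.erase s(x, y) := by
      ext e
      simp only [SimpleGraph.mem_edgeFinset, hG', SimpleGraph.edgeSet_deleteEdges,
        Set.mem_diff, Set.mem_singleton_iff, Finset.mem_erase]
      tauto
    have hxyE : s(x, y) ∈ G.edgeFinset := by
      rw [SimpleGraph.mem_edgeFinset]; exact hxy
    have hcard : G'.edgeFinset.card = G.edgeFinset.card - 1 := by
      rw [hedge, Finset.card_erase_of_mem hxyE]
    have hm1 : 1 ≤ G.edgeFinset.card := Finset.card_pos.2 ⟨_, hxyE⟩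
    have := ih G' hconn' h4' hdeg' hk'
    omega


lemma sum_t : ∑ u, (triAt G u).card = 3 * (G.cliqueFinset 3).card := by
  have h1 : ∀ u : V, (triAt G u).card = ∑ T ∈ G.cliqueFinset 3, if u ∈ T then 1 else 0 := by
    intro u
    rw [triAt, ← Finset.sum_filter]
    simp
  simp_rw [h1]
  rw [Finset.sum_comm]
  have h2 : ∀ T ∈ G.cliqueFinset 3, (∑ u : V, if u ∈ T then 1 else 0) = 3 := by
    intro T hT
    rw [Finset.sum_ite_mem, Finset.univ_inter, Finset.sum_const, smul_eq_mul, mul_one]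
    exact (mem_cliqueFinset_iff.1 hT).card_eq
  rw [Finset.sum_congr rfl h2, Finset.sum_const, smul_eq_mul, mul_comm]

lemma sum_t_deg2 :
    ∑ u ∈ Finset.univ.filter (fun u => G.degree u = 2), (triAt G u).card
      = ∑ T ∈ G.cliqueFinset 3, (T.filter (fun v => G.degree v = 2)).card := by
  have h1 : ∀ u : V, (triAt G u).card = ∑ T ∈ G.cliqueFinset 3, if u ∈ T then 1 else 0 := by
    intro u
    rw [triAt, ← Finset.sum_filter]
    simp
  simp_rw [h1]
  rw [Finset.sum_comm]
  apply Finset.sum_congr rfl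
  intro T hT
  rw [Finset.sum_ite_mem]
  have : Finset.univ.filter (fun u => G.degree u = 2) ∩ T
      = T.filter (fun v => G.degree v = 2) := by
    ext v
    simp only [Finset.mem_inter, Finset.mem_filter, Finset.mem_univ, true_and]
    tauto
  rw [this]
  simp

lemma t_le_one_of_deg2 {u : V} (hu : G.degree u = 2) : (triAt G u).card ≤ 1 := by
  have hsub : triAt G u ⊆ {insert u (G.neighborFinset u)} := by
    intro T hT
    rw [Finset.mem_singleton]
    simp only [triAt, Finset.mem_filter, mem_cliqueFinset_iff] at hT
    obtain ⟨hTc, huT⟩ := hT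
    have hsub2 : T.erase u ⊆ G.neighborFinset u := by
      intro v hv
      rw [Finset.mem_erase] at hv
      rw [mem_neighborFinset]
      exact hTc.1 huT hv.2 (Ne.symm hv.1)
    have hcard2 : (T.erase u).card = 2 := by
      rw [Finset.card_erase_of_mem huT, hTc.card_eq]
    have : T.erase u = G.neighborFinset u :=
      Finset.eq_of_subset_of_card_le hsub2 (by rw [hcard2]; exact le_of_eq hu)
    rw [← this, Finset.insert_erase huT]
  calc (triAt G u).card ≤ _ := Finset.card_le_card hsub
    _ = 1 := Finset.card_singleton _

lemma tri_deg2_le_two (hG : G.Connected) (hn : 4 ≤ Fintype.card V) {T : Finset V}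
    (hT : T ∈ G.cliqueFinset 3) : (T.filter (fun v => G.degree v = 2)).card ≤ 2 := by
  obtain ⟨v, hvT, hv3⟩ := tri_deg3 G hG hn hT
  have hsub : T.filter (fun v => G.degree v = 2) ⊆ T.erase v := by
    intro w hw
    rw [Finset.mem_filter] at hw
    rw [Finset.mem_erase]
    exact ⟨fun h => by subst h; omega, hw.1⟩
  calc (T.filter (fun v => G.degree v = 2)).card ≤ (T.erase v).card :=
        Finset.card_le_card hsub
    _ = 2 := by rw [Finset.card_erase_of_mem hvT, (mem_cliqueFinset_iff.1 hT).card_eq]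


end Aux

/-- A connected subcubic graph of order `n ≥ 6` with `n ≡ 1 (mod 4)` has
clustering coefficient at most `7/12 + 13/(12 * (Fintype.card V : ℝ))`. -/
theorem subcubic_clustering_mod1 {V : Type*} [Fintype V] (G : SimpleGraph V)
    (hconn : G.Connected) (hdeg : ∀ v, deg G v ≤ 3)
    (hn : 6 ≤ Fintype.card V) (hmod : Fintype.card V % 4 = 1) :
    cc G ≤ 7/12 + 13/(12 * (Fintype.card V : ℝ)) := by
  letI : DecidableEq V := Classical.decEq V
  letI : DecidableRel G.Adj := Classical.decRel _
  set n := Fintype.card V with hn_def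
  have hdeg' : ∀ v, G.degree v ≤ 3 := fun v => by rw [← deg_eq_degree]; exact hdeg v
  set Δ := (G.cliqueFinset 3).card with hΔ
  set A := Finset.univ.filter (fun u => G.degree u = 2) with hA
  set B := Finset.univ.filter (fun u => G.degree u = 3) with hB
  set a := ∑ u ∈ A, (triAt G u).card with ha
  set b := ∑ u ∈ B, (triAt G u).card with hb
  -- integer inequalities
  have haA : a ≤ A.card := by
    rw [ha]
    calc ∑ u ∈ A, (triAt G u).card ≤ ∑ u ∈ A, 1 := by
          apply Finset.sum_le_sum
          intro u hu
          exact t_le_one_of_deg2 G (Finset.mem_filter.1 hu).2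
      _ = A.card := by rw [Finset.sum_const, smul_eq_mul, mul_one]
  have ha2 : a ≤ 2 * Δ := by
    rw [ha, hA, sum_t_deg2]
    calc ∑ T ∈ G.cliqueFinset 3, (T.filter (fun v => G.degree v = 2)).card
        ≤ ∑ T ∈ G.cliqueFinset 3, 2 := by
          apply Finset.sum_le_sum
          intro T hT
          exact tri_deg2_le_two G hconn (by omega) hT
      _ = 2 * Δ := by rw [Finset.sum_const, smul_eq_mul, mul_comm]
  have hk4 : G.CliqueFree 4 := k4free G hconn hdeg' (by omega)
  have hm : n - 1 + Δ ≤ G.edgeFinset.card := edges_ge Δ G hconn hk4 hdeg' rfl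
  have hdegsum : ∑ v, G.degree v = 2 * G.edgeFinset.card :=
    SimpleGraph.sum_degrees_eq_twice_card_edges G
  have hsplit : ∑ v ∈ A, G.degree v + ∑ v ∈ Finset.univ.filter (fun u => ¬ G.degree u = 2),
      G.degree v = ∑ v, G.degree v := by
    rw [hA]
    exact Finset.sum_filter_add_sum_filter_not _ _ _
  have hcards : A.card + (Finset.univ.filter (fun u => ¬ G.degree u = 2)).card = n := by
    rw [hA, hn_def, ← Finset.card_univ]
    exact Finset.card_filter_add_card_filter_not _
  have hsumA : ∑ v ∈ A, G.degree v = 2 * A.card := by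
    rw [Finset.sum_congr rfl (fun v hv => (Finset.mem_filter.1 hv).2), Finset.sum_const,
      smul_eq_mul, mul_comm]
  have hsumNA : ∑ v ∈ Finset.univ.filter (fun u => ¬ G.degree u = 2), G.degree v
      ≤ 3 * (Finset.univ.filter (fun u => ¬ G.degree u = 2)).card := by
    calc _ ≤ ∑ _v ∈ Finset.univ.filter (fun u => ¬ G.degree u = 2), 3 :=
          Finset.sum_le_sum (fun v _ => hdeg' v)
      _ = _ := by rw [Finset.sum_const, smul_eq_mul, mul_comm]
  have hsum3 : a + b ≤ 3 * Δ := by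
    have hdisj : Disjoint A B := by
      rw [Finset.disjoint_filter]
      intro x _ h2 h3
      omega
    have : a + b = ∑ u ∈ A ∪ B, (triAt G u).card := (Finset.sum_union hdisj).symm
    rw [this, hΔ, ← sum_t G]
    exact Finset.sum_le_sum_of_subset (Finset.subset_univ _)
  have hkey : 12 * Δ + 8 * a ≤ 7 * n + 13 := by
    have h2m : 2 * G.edgeFinset.card + A.card ≤ 3 * n := by omega
    omega
  -- real-valued computation
  have hcc : ∀ u, localCC G u = (if G.degree u = 2 then ((triAt G u).card : ℝ) else 0)
      + (if G.degree u = 3 then ((triAt G u).card : ℝ)/3 else 0) := by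
    intro u
    rw [localCC, deg_eq_degree, nbrE_eq]
    have hd := hdeg' u
    interval_cases h : G.degree u
    · norm_num
    · norm_num
    · norm_num
    · norm_num
  have hsumcc : ∑ u, localCC G u = (a : ℝ) + (b : ℝ)/3 := by
    rw [Finset.sum_congr rfl (fun u _ => hcc u), Finset.sum_add_distrib]
    congr 1
    · rw [ha, Nat.cast_sum, hA, Finset.sum_filter]
    · rw [hb, Nat.cast_sum, hB, Finset.sum_filter, Finset.sum_div]
      apply Finset.sum_congr rfl
      intro u _
      split_ifs <;> simp
  have hbound : ∑ u, localCC G u ≤ (7 * (n : ℝ) + 13) / 12 := by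
    rw [hsumcc]
    have h1 : (a : ℝ) + (b : ℝ) ≤ 3 * (Δ : ℝ) := by
      have := hsum3
      push_cast
      exact_mod_cast Nat.cast_le.2 this
    have h2 : 12 * (Δ : ℝ) + 8 * (a : ℝ) ≤ 7 * (n : ℝ) + 13 := by
      exact_mod_cast Nat.cast_le.2 hkey
    linarith
  have hn0 : (0 : ℝ) < (n : ℝ) := by
    have : 0 < n := by omega
    exact_mod_cast this
  rw [cc, ← hn_def, div_le_iff₀ hn0]
  calc ∑ u, localCC G u ≤ (7 * (n : ℝ) + 13) / 12 := hbound
    _ = (7/12 + 13/(12 * (n : ℝ))) * (n : ℝ) := by field_simp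

end ClusterCoeff
end

section
/- If G is a graph of order n ≥ 3 and u, v are distinct non-adjacent vertices of G, then C(G + uv) ≤ C(G) + 1 − 2/n + 4/(n(n−1)). -/
namespace ClusterCoeff

section Aux

open Finset

variable {V : Type*} [Fintype V]

/-- Ordered adjacent pairs within the neighborhood of `u`, as a set of pairs in `V × V`. -/
def PS {V : Type*} (G : SimpleGraph V) (u : V) : Set (V × V) :=
  {p | p.1 ∈ G.neighborSet u ∧ p.2 ∈ G.neighborSet u ∧ G.Adj p.1 p.2}

lemma deg_eq (G : SimpleGraph V) (u : V) : deg G u = (G.neighborSet u).ncard :=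
  Nat.card_coe_set_eq _

lemma nbrE_eq_s11 (G : SimpleGraph V) (u : V) : nbrE G u = (PS G u).ncard / 2 := by
  unfold nbrE
  congr 1
  rw [← Nat.card_coe_set_eq]
  exact Nat.card_congr
    ⟨fun x => ⟨(x.1.1.1, x.1.2.1), x.1.1.2, x.1.2.2, x.2⟩,
     fun x => ⟨(⟨x.1.1, x.2.1⟩, ⟨x.1.2, x.2.2.1⟩), x.2.2.2⟩,
     fun x => rfl, fun x => rfl⟩

lemma PS_ncard_le (G : SimpleGraph V) (u : V) :
    (PS G u).ncard ≤ deg G u * (deg G u - 1) := by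
  classical
  have hmul : deg G u * (deg G u - 1) = deg G u * deg G u - deg G u := by
    cases h : deg G u with
    | zero => rfl
    | succ n => rw [Nat.succ_sub_one, Nat.mul_succ, Nat.add_sub_cancel]
  rw [hmul, deg_eq, Set.ncard_eq_toFinset_card' (PS G u), Set.ncard_eq_toFinset_card',
    ← Finset.offDiag_card]
  apply Finset.card_le_card
  intro p hp
  rw [Set.mem_toFinset] at hp
  obtain ⟨h1, h2, h3⟩ := hp
  simp only [Finset.mem_offDiag, Set.mem_toFinset]
  exact ⟨h1, h2, h3.ne⟩

lemma nbrE_le (G : SimpleGraph V) (u : V) : nbrE G u ≤ (deg G u).choose 2 := by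
  rw [nbrE_eq_s11, Nat.choose_two_right]
  exact Nat.div_le_div_right (PS_ncard_le G u)

lemma localCC_nonneg (G : SimpleGraph V) (u : V) : 0 ≤ localCC G u := by
  unfold localCC
  split
  · positivity
  · exact le_refl 0

lemma localCC_le_one (G : SimpleGraph V) (u : V) : localCC G u ≤ 1 := by
  unfold localCC
  split
  · rename_i h
    rw [div_le_one (by exact_mod_cast Nat.choose_pos h)]
    exact_mod_cast nbrE_le G u
  · exact zero_le_one

lemma neighborSet_addEdge_of_ne (G : SimpleGraph V) {u v : V} {w : V}
    (hwu : w ≠ u) (hwv : w ≠ v) :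
    (addEdge G u v).neighborSet w = G.neighborSet w := by
  ext b
  simp only [SimpleGraph.mem_neighborSet]
  constructor
  · rintro ⟨h1, h2 | ⟨rfl, rfl⟩ | ⟨rfl, rfl⟩⟩
    · exact h2
    · exact absurd rfl hwu
    · exact absurd rfl hwv
  · intro h
    exact ⟨h.ne, Or.inl h⟩

lemma neighborSet_addEdge_self (G : SimpleGraph V) {u v : V} (hne : u ≠ v) :
    (addEdge G u v).neighborSet u = insert v (G.neighborSet u) := by
  ext b
  simp only [SimpleGraph.mem_neighborSet, Set.mem_insert_iff]
  constructor
  · rintro ⟨h1, h2 | ⟨-, rfl⟩ | ⟨h3, rfl⟩⟩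
    · exact Or.inr h2
    · exact Or.inl rfl
    · exact absurd h3 hne
  · rintro (rfl | h)
    · exact ⟨hne, Or.inr (Or.inl ⟨rfl, rfl⟩)⟩
    · exact ⟨h.ne, Or.inl h⟩

lemma deg_addEdge_self (G : SimpleGraph V) {u v : V} (hne : u ≠ v) (hnadj : ¬ G.Adj u v) :
    deg (addEdge G u v) u = deg G u + 1 := by
  have hv : v ∉ G.neighborSet u := fun h => hnadj h
  rw [deg_eq, deg_eq, neighborSet_addEdge_self G hne,
    Set.ncard_insert_of_notMem hv (Set.toFinite _)]

lemma addEdge_comm (G : SimpleGraph V) (u v : V) : addEdge G u v = addEdge G v u := by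
  ext a b
  constructor <;> (rintro ⟨h1, h2⟩; exact ⟨h1, by tauto⟩)

lemma PS_addEdge_of_ne (G : SimpleGraph V) {u v w : V} (hwu : w ≠ u) (hwv : w ≠ v)
    (hw : ¬ (G.Adj u w ∧ G.Adj v w)) : PS (addEdge G u v) w = PS G w := by
  ext ⟨a, b⟩
  simp only [PS, Set.mem_setOf_eq, neighborSet_addEdge_of_ne G hwu hwv,
    SimpleGraph.mem_neighborSet]
  constructor
  · rintro ⟨ha, hb, hab⟩
    refine ⟨ha, hb, ?_⟩
    rcases hab.2 with h | ⟨rfl, rfl⟩ | ⟨rfl, rfl⟩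
    · exact h
    · exact absurd ⟨ha.symm, hb.symm⟩ hw
    · exact absurd ⟨hb.symm, ha.symm⟩ hw
  · rintro ⟨ha, hb, hab⟩
    exact ⟨ha, hb, hab.ne, Or.inl hab⟩

lemma PS_addEdge_self_subset (G : SimpleGraph V) {u v : V} (hne : u ≠ v)
    (hnadj : ¬ G.Adj u v) :
    PS (addEdge G u v) u ⊆ PS G u ∪ ((fun w => (v, w)) '' {w | G.Adj u w ∧ G.Adj v w})
      ∪ ((fun w => (w, v)) '' {w | G.Adj u w ∧ G.Adj v w}) := by
  rintro ⟨a, b⟩ ⟨ha, hb, hab⟩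
  rw [neighborSet_addEdge_self G hne] at ha hb
  simp only [Set.mem_insert_iff, SimpleGraph.mem_neighborSet] at ha hb
  have hadj : G.Adj a b := by
    rcases hab.2 with h | ⟨rfl, rfl⟩ | ⟨rfl, rfl⟩
    · exact h
    · rcases ha with h' | h'
      · exact absurd h' hne
      · exact absurd h' (G.irrefl)
    · rcases hb with h' | h'
      · exact absurd h' hne
      · exact absurd h' (G.irrefl)
  by_cases hav : a = v
  · subst hav
    have hb' : G.Adj u b := by
      rcases hb with h' | h'
      · exact absurd h'.symm hadj.ne
      · exact h'
    exact Or.inl (Or.inr ⟨b, ⟨hb', hadj⟩, rfl⟩)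
  · by_cases hbv : b = v
    · subst hbv
      have ha' : G.Adj u a := by
        rcases ha with h' | h'
        · exact absurd h' hav
        · exact h'
      exact Or.inr ⟨a, ⟨ha', hadj.symm⟩, rfl⟩
    · have ha' : G.Adj u a := ha.resolve_left hav
      have hb' : G.Adj u b := hb.resolve_left hbv
      exact Or.inl (Or.inl ⟨ha', hb', hadj⟩)

lemma nbrE_addEdge_le (G : SimpleGraph V) {u v : V} (hne : u ≠ v) (hnadj : ¬ G.Adj u v) :
    nbrE (addEdge G u v) u ≤ nbrE G u + {w | G.Adj u w ∧ G.Adj v w}.ncard := by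
  rw [nbrE_eq_s11, nbrE_eq_s11]
  set t := {w | G.Adj u w ∧ G.Adj v w}.ncard with ht
  have h1 : (PS (addEdge G u v) u).ncard ≤ (PS G u).ncard + t * 2 := by
    refine le_trans (Set.ncard_le_ncard (PS_addEdge_self_subset G hne hnadj)
      (Set.toFinite _)) ?_
    refine le_trans (Set.ncard_union_le _ _) ?_
    have h2 := Set.ncard_union_le (PS G u)
      ((fun w => (v, w)) '' {w | G.Adj u w ∧ G.Adj v w})
    have h3 := Set.ncard_image_le (s := {w | G.Adj u w ∧ G.Adj v w})
      (f := fun w => (v, w)) (Set.toFinite _)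
    have h4 := Set.ncard_image_le (s := {w | G.Adj u w ∧ G.Adj v w})
      (f := fun w => (w, v)) (Set.toFinite _)
    omega
  calc (PS (addEdge G u v) u).ncard / 2 ≤ ((PS G u).ncard + t * 2) / 2 :=
        Nat.div_le_div_right h1
    _ = (PS G u).ncard / 2 + t := Nat.add_mul_div_right _ _ (by norm_num)

lemma key (G G' : SimpleGraph V) (u : V) (t : ℕ)
    (hdeg : deg G' u = deg G u + 1)
    (hm : nbrE G' u ≤ nbrE G u + t)
    (ht : t ≤ deg G u) :
    localCC G' u ≤ localCC G u + (if t = 0 then (0:ℝ) else 2 / ((t : ℝ) + 1)) := by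
  rcases lt_or_ge (deg G u) 2 with hd2 | hd2
  · have hcases : deg G u = 0 ∨ deg G u = 1 := by omega
    rcases hcases with hd | hd
    · have ht0 : t = 0 := by omega
      have h1 : localCC G' u = 0 := by
        unfold localCC
        rw [if_neg (by omega)]
      have h2 : localCC G u = 0 := by
        unfold localCC
        rw [if_neg (by omega)]
      simp [h1, h2, ht0]
    · rcases (by omega : t = 0 ∨ t = 1) with ht0 | ht1
      · have hm0 : nbrE G u = 0 := by
          have := nbrE_le G u
          rw [hd] at this
          simpa using this
        have hm0' : nbrE G' u = 0 := by omega
        have h1 : localCC G' u = 0 := by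
          unfold localCC
          rw [hm0', if_pos (by omega)]
          simp
        have h2 : localCC G u = 0 := by
          unfold localCC
          rw [if_neg (by omega)]
        simp [h1, h2, ht0]
      · rw [if_neg (by omega)]
        have h1 := localCC_le_one G' u
        have h2 := localCC_nonneg G u
        rw [ht1]
        norm_num
        linarith
  · have hc : (0:ℝ) < (deg G u).choose 2 := by exact_mod_cast Nat.choose_pos hd2
    have hc' : (0:ℝ) < (deg G u + 1).choose 2 := by
      exact_mod_cast Nat.choose_pos (by omega)
    have hL' : localCC G' u = (nbrE G' u : ℝ) / ((deg G u + 1).choose 2) := by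
      unfold localCC
      rw [hdeg, if_pos (by omega)]
    have hL : localCC G u = (nbrE G u : ℝ) / ((deg G u).choose 2) := by
      unfold localCC
      rw [if_pos hd2]
    rw [hL', hL]
    by_cases ht0 : t = 0
    · rw [if_pos ht0, add_zero]
      subst ht0
      have h1 : (nbrE G' u : ℝ) ≤ nbrE G u := by exact_mod_cast (by omega : nbrE G' u ≤ nbrE G u)
      exact div_le_div₀ (by positivity) h1 hc
        (by exact_mod_cast Nat.choose_le_choose 2 (Nat.le_succ _))
    · rw [if_neg ht0]
      have htpos : (1:ℝ) ≤ t := by exact_mod_cast Nat.one_le_iff_ne_zero.mpr ht0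
      have hmR : (nbrE G' u : ℝ) ≤ (nbrE G u : ℝ) + t := by exact_mod_cast hm
      have step1 : (nbrE G' u : ℝ) / ((deg G u + 1).choose 2) ≤
          ((nbrE G u : ℝ) + t) / ((deg G u + 1).choose 2) := by gcongr
      have step2 : (nbrE G u : ℝ) / ((deg G u + 1).choose 2) ≤
          (nbrE G u : ℝ) / ((deg G u).choose 2) :=
        div_le_div₀ (by positivity) (le_refl _) hc
          (by exact_mod_cast Nat.choose_le_choose 2 (Nat.le_succ _))
      have step3 : (t : ℝ) / ((deg G u + 1).choose 2) ≤ 2 / ((t:ℝ) + 1) := by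
        rw [div_le_div_iff₀ hc' (by linarith)]
        have h2 : 2 * ((deg G u + 1).choose 2) = (deg G u + 1) * deg G u := by
          rw [Nat.choose_two_right]
          simp only [Nat.add_sub_cancel]
          rw [Nat.mul_comm 2, Nat.div_mul_cancel]
          rw [Nat.mul_comm]
          exact (Nat.even_mul_succ_self (deg G u)).two_dvd
        have h3 : t * (t + 1) ≤ deg G u * (deg G u + 1) :=
          Nat.mul_le_mul ht (by omega)
        have h4 : deg G u * (deg G u + 1) = 2 * ((deg G u + 1).choose 2) :=
          (Nat.mul_comm _ _).trans h2.symm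
        calc (t:ℝ) * ((t:ℝ) + 1) ≤ (deg G u : ℝ) * ((deg G u : ℝ) + 1) := by
              exact_mod_cast h3
          _ = 2 * (((deg G u + 1).choose 2 : ℕ) : ℝ) := by exact_mod_cast h4
      have e : ((nbrE G u : ℝ) + t) / ((deg G u + 1).choose 2) =
          (nbrE G u : ℝ) / ((deg G u + 1).choose 2) + (t : ℝ) / ((deg G u + 1).choose 2) :=
        add_div _ _ _
      linarith

end Aux

/-- Adding a single edge to a graph of order `n ≥ 3` increases the
clustering coefficient by at most `1 - 2/n + 4/(n(n-1))`. -/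
theorem cc_addEdge_bound {V : Type*} [Fintype V] (G : SimpleGraph V) (u v : V)
    (hn : 3 ≤ Fintype.card V) (hne : u ≠ v) (hnadj : ¬ G.Adj u v) :
    cc (addEdge G u v) ≤ cc G +
      (1 - 2 / (Fintype.card V : ℝ) +
        4 / ((Fintype.card V : ℝ) * ((Fintype.card V : ℝ) - 1))) := by
  classical
  set G' := addEdge G u v with hG'
  set S : Set V := {w | G.Adj u w ∧ G.Adj v w} with hS
  set t : ℕ := S.ncard with htdef
  set T : Finset V := S.toFinset with hTdef
  have htT : T.card = t := (Set.ncard_eq_toFinset_card' S).symm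
  have hmemT : ∀ w, w ∈ T ↔ (G.Adj u w ∧ G.Adj v w) := by
    intro w
    rw [hTdef, Set.mem_toFinset]
    rfl
  have hTsub : T ⊆ Finset.univ \ {u, v} := by
    intro w hw
    rw [hmemT] at hw
    simp only [Finset.mem_sdiff, Finset.mem_univ, Finset.mem_insert, Finset.mem_singleton,
      true_and]
    push_neg
    constructor
    · rintro rfl
      exact G.irrefl hw.1
    · rintro rfl
      exact hnadj hw.1
  have htn : t + 2 ≤ Fintype.card V := by
    have h1 := Finset.card_le_card hTsub
    rw [Finset.card_sdiff_of_subset (Finset.subset_univ _), Finset.card_univ,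
      Finset.card_pair hne] at h1
    omega
  have htu : t ≤ deg G u := by
    rw [htdef, deg_eq, Set.ncard_eq_toFinset_card' S, Set.ncard_eq_toFinset_card']
    apply Finset.card_le_card
    intro w hw
    rw [Set.mem_toFinset] at hw ⊢
    exact (hw : G.Adj u w ∧ G.Adj v w).1
  have htv : t ≤ deg G v := by
    rw [htdef, deg_eq, Set.ncard_eq_toFinset_card' S, Set.ncard_eq_toFinset_card']
    apply Finset.card_le_card
    intro w hw
    rw [Set.mem_toFinset] at hw ⊢
    exact (hw : G.Adj u w ∧ G.Adj v w).2
  have hdu : localCC G' u ≤ localCC G u + (if t = 0 then (0:ℝ) else 2 / ((t:ℝ) + 1)) :=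
    key G G' u t (deg_addEdge_self G hne hnadj) (nbrE_addEdge_le G hne hnadj) htu
  have hSsymm : {w | G.Adj v w ∧ G.Adj u w} = S := by
    rw [hS]
    ext w
    exact and_comm
  have hcomm : G' = addEdge G v u := by
    rw [hG']
    exact addEdge_comm G u v
  have hdv : localCC G' v ≤ localCC G v + (if t = 0 then (0:ℝ) else 2 / ((t:ℝ) + 1)) := by
    apply key G G' v t
    · rw [hcomm]
      exact deg_addEdge_self G hne.symm (fun h => hnadj h.symm)
    · rw [hcomm]
      have h := nbrE_addEdge_le G hne.symm (fun h => hnadj h.symm)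
      rwa [hSsymm, ← htdef] at h
    · exact htv
  have hrest : ∀ w ∈ Finset.univ \ ({u, v} : Finset V),
      localCC G' w - localCC G w ≤ if w ∈ T then (1:ℝ) else 0 := by
    intro w hw
    simp only [Finset.mem_sdiff, Finset.mem_univ, Finset.mem_insert, Finset.mem_singleton,
      true_and] at hw
    push_neg at hw
    obtain ⟨hwu, hwv⟩ := hw
    by_cases hwT : w ∈ T
    · rw [if_pos hwT]
      linarith [localCC_le_one G' w, localCC_nonneg G w]
    · rw [if_neg hwT]
      have h1 : ¬ (G.Adj u w ∧ G.Adj v w) := fun h => hwT ((hmemT w).2 h)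
      have hdw : deg G' w = deg G w := by
        rw [hG', deg_eq, deg_eq, neighborSet_addEdge_of_ne G hwu hwv]
      have hmw : nbrE G' w = nbrE G w := by
        rw [hG', nbrE_eq_s11, nbrE_eq_s11, PS_addEdge_of_ne G hwu hwv h1]
      have heq : localCC G' w = localCC G w := by
        unfold localCC
        rw [hdw, hmw]
      rw [heq]
      simp
  have hsplit : ∀ H : SimpleGraph V, ∑ w, localCC H w =
      ∑ w ∈ Finset.univ \ ({u, v} : Finset V), localCC H w + (localCC H u + localCC H v) := by
    intro H
    rw [← Finset.sum_sdiff (Finset.subset_univ ({u, v} : Finset V)), Finset.sum_pair hne]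
  have hmid : ∑ w ∈ Finset.univ \ ({u, v} : Finset V), localCC G' w ≤
      ∑ w ∈ Finset.univ \ ({u, v} : Finset V), localCC G w + t := by
    have h1 := Finset.sum_le_sum hrest
    rw [Finset.sum_sub_distrib] at h1
    have h2 : ∑ w ∈ Finset.univ \ ({u, v} : Finset V), (if w ∈ T then (1:ℝ) else 0) = t := by
      rw [Finset.sum_ite_mem, Finset.inter_eq_right.mpr hTsub, Finset.sum_const,
        nsmul_eq_mul, mul_one, htT]
    linarith
  have hn3 : (3:ℝ) ≤ (Fintype.card V : ℝ) := by exact_mod_cast hn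
  have htn' : (t:ℝ) + 2 ≤ (Fintype.card V : ℝ) := by exact_mod_cast htn
  have harr : (t:ℝ) + ((if t = 0 then (0:ℝ) else 2/((t:ℝ)+1)) +
      (if t = 0 then (0:ℝ) else 2/((t:ℝ)+1))) ≤
      (Fintype.card V : ℝ) - 2 + 4 / ((Fintype.card V : ℝ) - 1) := by
    have hp2 : (0:ℝ) < (Fintype.card V : ℝ) - 1 := by linarith
    by_cases ht0 : t = 0
    · rw [if_pos ht0, ht0]
      have h0 : (0:ℝ) ≤ 4 / ((Fintype.card V : ℝ) - 1) := by positivity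
      push_cast
      linarith
    · rw [if_neg ht0]
      have h1 : (1:ℝ) ≤ (t:ℝ) := by exact_mod_cast Nat.one_le_iff_ne_zero.mpr ht0
      have hp1 : (0:ℝ) < (t:ℝ) + 1 := by linarith
      have h4 : (4:ℝ) ≤ ((t:ℝ)+1) * ((Fintype.card V : ℝ)-1) := by nlinarith
      have hgap : (0:ℝ) ≤ (Fintype.card V : ℝ) - 2 - t := by linarith
      have e2 : 4/((t:ℝ)+1) - 4/((Fintype.card V : ℝ)-1) =
          4 * (((Fintype.card V : ℝ)-1) - ((t:ℝ)+1)) /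
            (((t:ℝ)+1) * ((Fintype.card V : ℝ)-1)) := by
        field_simp
      have e3 : 4 * (((Fintype.card V : ℝ)-1) - ((t:ℝ)+1)) /
          (((t:ℝ)+1) * ((Fintype.card V : ℝ)-1)) ≤ (Fintype.card V : ℝ) - 2 - t := by
        rw [div_le_iff₀ (by positivity)]
        nlinarith
      have e1 : 2/((t:ℝ)+1) + 2/((t:ℝ)+1) = 4/((t:ℝ)+1) := by ring
      linarith
  have hsum : ∑ w, localCC G' w ≤ ∑ w, localCC G w +
      ((Fintype.card V : ℝ) - 2 + 4 / ((Fintype.card V : ℝ) - 1)) := by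
    rw [hsplit G', hsplit G]
    linarith [hmid, hdu, hdv, harr]
  have hn0 : (0:ℝ) < (Fintype.card V : ℝ) := by linarith
  have hR : (1 - 2/(Fintype.card V : ℝ) +
      4/((Fintype.card V : ℝ) * ((Fintype.card V : ℝ)-1))) * (Fintype.card V : ℝ) =
      (Fintype.card V : ℝ) - 2 + 4/((Fintype.card V : ℝ)-1) := by
    have hp2 : (0:ℝ) < (Fintype.card V : ℝ) - 1 := by linarith
    field_simp
  unfold cc
  rw [← sub_le_iff_le_add', div_sub_div_same, div_le_iff₀ hn0]
  linarith [hsum, hR]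
end ClusterCoeff
end
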